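/- arXiv:0901.1070 — 4 statements merged into one kernel-verified Lean document; each statement's English description precedes it below -/
import Mathlib

section
/- Theorem 1 (gauge invariance of the teleparallel Lagrangian): Let ϑ be a continuously differentiable coframe on U, let φ ∈ ℝ be a constant, and let f : U → ℂ be continuously differentiable. Define the transformed fields l̃ := l, m̃ := e^{iφ} m + f l, ñ := n + f e^{−iφ} m̄ + f̄ e^{iφ} m + |f|² l (the action of a general element of the gauge group H on the coframe). Then λ(l̃, m̃, ñ) = λ(l, m, n) at every point of U. -/
noncomputable section

open scoped Matrix

/-- Points of ℝ⁴. -/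
abbrev Pt : Type := Fin 4 → ℝ

/-- Partial derivative ∂_α of a function on ℝ⁴. -/
def pd {E : Type*} [NormedAddCommGroup E] [NormedSpace ℝ E]
    (α : Fin 4) (f : Pt → E) (x : Pt) : E :=
  fderiv ℝ f x (Pi.single α 1)

/-- o_{jk} = o^{jk} = diag(1,-1,-1,-1). -/
def oM : Fin 4 → Fin 4 → ℝ := fun j k => if j = k then (if j = 0 then 1 else -1) else 0

/-- Totally antisymmetric symbol, ε_{0123} = 1. -/
def eps (a b c d : Fin 4) : ℝ :=
  ∑ σ : Equiv.Perm (Fin 4),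
    if σ 0 = a ∧ σ 1 = b ∧ σ 2 = c ∧ σ 3 = d then ((Equiv.Perm.sign σ : ℤ) : ℝ) else 0

/-- Determinant det(ϑ^j_α) of a coframe. -/
def cofDet (ϑ : Fin 4 → Pt → Fin 4 → ℝ) (x : Pt) : ℝ :=
  Matrix.det (Matrix.of fun j α => ϑ j x α)

/-- l := ϑ⁰ + ϑ³. -/
def lC (ϑ : Fin 4 → Pt → Fin 4 → ℝ) (x : Pt) (α : Fin 4) : ℂ :=
  (ϑ 0 x α : ℂ) + (ϑ 3 x α : ℂ)

/-- m := ϑ¹ + iϑ². -/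
def mC (ϑ : Fin 4 → Pt → Fin 4 → ℝ) (x : Pt) (α : Fin 4) : ℂ :=
  (ϑ 1 x α : ℂ) + Complex.I * (ϑ 2 x α : ℂ)

/-- n := ϑ⁰ - ϑ³. -/
def nC (ϑ : Fin 4 → Pt → Fin 4 → ℝ) (x : Pt) (α : Fin 4) : ℂ :=
  (ϑ 0 x α : ℂ) - (ϑ 3 x α : ℂ)

/-- The teleparallel Lagrangian density
λ(l,m,n) := (1/6) ε^{αβγδ} l_α (n_β ∂_γ l_δ − m̄_β ∂_γ m_δ − m_β ∂_γ m̄_δ). -/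
def lam (l m n : Pt → Fin 4 → ℂ) (x : Pt) : ℂ :=
  (1/6 : ℂ) * ∑ α : Fin 4, ∑ β : Fin 4, ∑ γ : Fin 4, ∑ δ : Fin 4,
    (eps α β γ δ : ℂ) * l x α *
      (n x β * pd γ (fun y => l y δ) x
        - (starRingEnd ℂ) (m x β) * pd γ (fun y => m y δ) x
        - m x β * pd γ (fun y => (starRingEnd ℂ) (m y δ)) x)

/-- (du)_{αβ} := ∂_α u_β − ∂_β u_α. -/
def dcov (u : Pt → Fin 4 → ℝ) (α β : Fin 4) (x : Pt) : ℝ :=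
  pd α (fun y => u y β) x - pd β (fun y => u y α) x

/-- Axial torsion T^ax(ϑ)_{αβγ}. -/
def Tax (ϑ : Fin 4 → Pt → Fin 4 → ℝ) (α β γ : Fin 4) (x : Pt) : ℝ :=
  (1/3 : ℝ) * ∑ j : Fin 4, ∑ k : Fin 4, oM j k *
    (ϑ j x α * dcov (ϑ k) β γ x + ϑ j x β * dcov (ϑ k) γ α x + ϑ j x γ * dcov (ϑ k) α β x)

/-- Metric g_{αβ} := o_{jk} ϑ^j_α ϑ^k_β. -/
def gmat (ϑ : Fin 4 → Pt → Fin 4 → ℝ) (x : Pt) : Matrix (Fin 4) (Fin 4) ℝ :=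
  Matrix.of fun α β => ∑ j : Fin 4, ∑ k : Fin 4, oM j k * ϑ j x α * ϑ k x β

/-- Inverse metric g^{αβ}. -/
def ginv (ϑ : Fin 4 → Pt → Fin 4 → ℝ) (x : Pt) : Matrix (Fin 4) (Fin 4) ℝ :=
  (gmat ϑ x)⁻¹

/-- Christoffel symbols Γ^β_{αγ}. -/
def Chr (ϑ : Fin 4 → Pt → Fin 4 → ℝ) (β α γ : Fin 4) (x : Pt) : ℝ :=
  (1/2 : ℝ) * ∑ δ : Fin 4, ginv ϑ x β δ *
    (pd α (fun y => gmat ϑ y γ δ) x + pd γ (fun y => gmat ϑ y α δ) x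
      - pd δ (fun y => gmat ϑ y α γ) x)

/-- Levi-Civita covariant derivative ∇_α u_β of a complex covector field. -/
def covC (ϑ : Fin 4 → Pt → Fin 4 → ℝ) (u : Pt → Fin 4 → ℂ) (α β : Fin 4) (x : Pt) : ℂ :=
  pd α (fun y => u y β) x - ∑ γ : Fin 4, (Chr ϑ γ α β x : ℂ) * u x γ

/-- Levi-Civita covariant derivative ∇_γ F_{αβ} of a complex 2-form. -/
def covF (ϑ : Fin 4 → Pt → Fin 4 → ℝ) (F : Pt → Fin 4 → Fin 4 → ℂ) (γ α β : Fin 4) (x : Pt) : ℂ :=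
  pd γ (fun y => F y α β) x - ∑ δ : Fin 4, (Chr ϑ δ γ α x : ℂ) * F x δ β
    - ∑ δ : Fin 4, (Chr ϑ δ γ β x : ℂ) * F x α δ

/-- The 2-form (l∧m)_{αβ}. -/
def lmForm (ϑ : Fin 4 → Pt → Fin 4 → ℝ) (x : Pt) (α β : Fin 4) : ℂ :=
  lC ϑ x α * mC ϑ x β - lC ϑ x β * mC ϑ x α

/-- The Griffiths–Newing covector v_α := ∇^β (l∧m)_{αβ} − m^β ∇_α l_β. -/
def vGN (ϑ : Fin 4 → Pt → Fin 4 → ℝ) (α : Fin 4) (x : Pt) : ℂ :=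
  (∑ β : Fin 4, ∑ γ : Fin 4, (ginv ϑ x β γ : ℂ) * covF ϑ (fun y a b => lmForm ϑ y a b) γ α β x)
  - ∑ β : Fin 4, ∑ γ : Fin 4, (ginv ϑ x β γ : ℂ) * mC ϑ x γ * covC ϑ (fun y b => lC ϑ y b) α β x

/-- l^α := g^{αβ} l_β. -/
def lup (ϑ : Fin 4 → Pt → Fin 4 → ℝ) (x : Pt) (α : Fin 4) : ℂ :=
  ∑ β : Fin 4, (ginv ϑ x α β : ℂ) * lC ϑ x β

/-- Divergence ∇_α l^α := ∂_α l^α + Γ^α_{αγ} l^γ. -/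
def divl (ϑ : Fin 4 → Pt → Fin 4 → ℝ) (x : Pt) : ℂ :=
  ∑ α : Fin 4, (pd α (fun y => lup ϑ y α) x
    + ∑ γ : Fin 4, (Chr ϑ α α γ x : ℂ) * lup ϑ x γ)

/-- Components of the 4-form L_tele(ϑ) = l ∧ T^ax. -/
def LteleForm (ϑ : Fin 4 → Pt → Fin 4 → ℝ) (α β γ δ : Fin 4) (x : Pt) : ℂ :=
  lC ϑ x α * (Tax ϑ β γ δ x : ℂ) - lC ϑ x β * (Tax ϑ α γ δ x : ℂ)
    + lC ϑ x γ * (Tax ϑ α β δ x : ℂ) - lC ϑ x δ * (Tax ϑ α β γ x : ℂ)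

/-- Hodge star of a complex 4-form: ★F := (1/24) √|det g| F^{αβγδ} ε_{αβγδ}. -/
def star4C (ϑ : Fin 4 → Pt → Fin 4 → ℝ) (F : Fin 4 → Fin 4 → Fin 4 → Fin 4 → ℂ) (x : Pt) : ℂ :=
  (1/24 : ℂ) * (cofDet ϑ x : ℂ) *
    ∑ α : Fin 4, ∑ β : Fin 4, ∑ γ : Fin 4, ∑ δ : Fin 4,
      ∑ α' : Fin 4, ∑ β' : Fin 4, ∑ γ' : Fin 4, ∑ δ' : Fin 4,
        (ginv ϑ x α α' : ℂ) * (ginv ϑ x β β' : ℂ) * (ginv ϑ x γ γ' : ℂ) * (ginv ϑ x δ δ' : ℂ) *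
          F α' β' γ' δ' * (eps α β γ δ : ℂ)

/-- Hodge star of a real 4-form. -/
def star4 (ϑ : Fin 4 → Pt → Fin 4 → ℝ) (F : Fin 4 → Fin 4 → Fin 4 → Fin 4 → ℝ) (x : Pt) : ℝ :=
  (1/24 : ℝ) * cofDet ϑ x *
    ∑ α : Fin 4, ∑ β : Fin 4, ∑ γ : Fin 4, ∑ δ : Fin 4,
      ∑ α' : Fin 4, ∑ β' : Fin 4, ∑ γ' : Fin 4, ∑ δ' : Fin 4,
        ginv ϑ x α α' * ginv ϑ x β β' * ginv ϑ x γ γ' * ginv ϑ x δ δ' *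
          F α' β' γ' δ' * eps α β γ δ

/-- ★L_tele(ϑ). -/
def starLtele (ϑ : Fin 4 → Pt → Fin 4 → ℝ) (x : Pt) : ℂ :=
  star4C ϑ (fun α β γ δ => LteleForm ϑ α β γ δ x) x

/-! In form language `λ` is the coefficient of `l ∧ (n ∧ dl - m̄ ∧ dm - m ∧ dm̄) / 6`. The gauge
transformation gives `dm̃ = e^{iφ} dm + df ∧ l + f dl`, and every term in which `l` appears a
second time dies against the leading `l`. What survives of `m̃̄ ∧ dm̃ + m̃ ∧ dm̃̄` is the old
expression plus `f e^{-iφ} m̄ ∧ dl + f̄ e^{iφ} m ∧ dl`, which is exactly the shift of `ñ ∧ dl`.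
Contracting `ε` with four covectors is a `4 × 4` determinant, so the vanishing of the terms
with `l` twice is `Matrix.det_zero_of_row_eq`. -/

open ComplexConjugate Finset

theorem sum_eps_mul_eq_det (x y z w : Fin 4 → ℂ) :
    ∑ a, ∑ b, ∑ c, ∑ d, (eps a b c d : ℂ) * x a * y b * z c * w d
      = (Matrix.of ![x, y, z, w]).det := by
  have hterm : ∀ a b c d, (eps a b c d : ℂ) * x a * y b * z c * w d =
      ∑ σ : Equiv.Perm (Fin 4), if σ 0 = a ∧ σ 1 = b ∧ σ 2 = c ∧ σ 3 = d then
        ((Equiv.Perm.sign σ : ℤ) : ℂ) * x (σ 0) * y (σ 1) * z (σ 2) * w (σ 3) else 0 := by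
    intro a b c d
    simp only [eps, Complex.ofReal_sum, sum_mul]
    refine sum_congr rfl fun σ _ => ?_
    split_ifs with hσ
    · obtain ⟨rfl, rfl, rfl, rfl⟩ := hσ
      push_cast
      ring
    · simp
  have hcomm (g : Fin 4 → Equiv.Perm (Fin 4) → ℂ) : ∑ a, ∑ σ, g a σ = ∑ σ, ∑ a, g a σ :=
    sum_comm
  rw [← Matrix.det_transpose, Matrix.det_apply']
  simp only [hterm, ite_and, hcomm]
  simp [Fin.prod_univ_four, mul_assoc]

def epsContract (l : Fin 4 → ℂ) : (Fin 4 → ℂ) →ₗ[ℂ] (Fin 4 → Fin 4 → ℂ) →ₗ[ℂ] ℂ :=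
  LinearMap.mk₂ ℂ (fun u D => ∑ a, ∑ b, ∑ c, ∑ d, (eps a b c d : ℂ) * l a * u b * D c d)
    (fun u u' D => by simp only [Pi.add_apply, mul_add, add_mul, sum_add_distrib])
    (fun r u D => by
      simp only [Pi.smul_apply, smul_eq_mul, mul_sum]
      simp only [mul_comm, mul_left_comm])
    (fun u D D' => by simp only [Pi.add_apply, mul_add, sum_add_distrib])
    (fun r u D => by
      simp only [Pi.smul_apply, smul_eq_mul, mul_sum]
      simp only [mul_comm, mul_left_comm])

theorem epsContract_apply (l u : Fin 4 → ℂ) (D : Fin 4 → Fin 4 → ℂ) :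
    epsContract l u D = ∑ a, ∑ b, ∑ c, ∑ d, (eps a b c d : ℂ) * l a * u b * D c d :=
  rfl

theorem epsContract_apply_outer (l u z w : Fin 4 → ℂ) :
    epsContract l u (fun c d => z c * w d) = (Matrix.of ![l, u, z, w]).det := by
  simp only [epsContract_apply, ← mul_assoc]
  exact sum_eps_mul_eq_det l u z w

theorem epsContract_self (l : Fin 4 → ℂ) : epsContract l l = 0 := by
  refine LinearMap.ext fun D => ?_
  have hD : D = ∑ k, fun c d => (Pi.single k (1 : ℂ) : Fin 4 → ℂ) c * D k d := by
    ext c d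
    simp [Finset.sum_apply, Pi.single_apply]
  rw [hD, map_sum]
  refine sum_eq_zero fun k _ => ?_
  rw [epsContract_apply_outer]
  exact Matrix.det_zero_of_row_eq (i := 0) (j := 1) (by decide) rfl

theorem epsContract_outer_self (l u z : Fin 4 → ℂ) :
    epsContract l u (fun c d => z c * l d) = 0 := by
  rw [epsContract_apply_outer]
  exact Matrix.det_zero_of_row_eq (i := 0) (j := 3) (by decide) rfl

def jac (u : Pt → Fin 4 → ℂ) (x : Pt) : Fin 4 → Fin 4 → ℂ :=
  fun γ δ => pd γ (fun y => u y δ) x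

theorem jac_const_mul_add_mul {u v : Pt → Fin 4 → ℂ} {g : Pt → ℂ} {x : Pt} (c : ℂ)
    (hu : ∀ δ, DifferentiableAt ℝ (fun y => u y δ) x)
    (hv : ∀ δ, DifferentiableAt ℝ (fun y => v y δ) x) (hg : DifferentiableAt ℝ g x) :
    jac (fun y δ => c * u y δ + g y * v y δ) x
      = c • jac u x + (fun γ δ => pd γ g x * v x δ) + g x • jac v x := by
  ext γ δ
  simp only [jac, pd, Pi.add_apply, Pi.smul_apply, smul_eq_mul]
  rw [fderiv_fun_add ((hu δ).const_mul c) (hg.fun_mul (hv δ)), fderiv_const_mul (hu δ),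
    fderiv_fun_mul hg (hv δ)]
  simp only [add_apply, smul_apply, smul_eq_mul]
  ring

theorem lam_eq_epsContract (l m n : Pt → Fin 4 → ℂ) (x : Pt) :
    lam l m n x = (1 / 6) * (epsContract (l x) (n x) (jac l x)
      - epsContract (l x) (fun β => conj (m x β)) (jac m x)
      - epsContract (l x) (m x) (jac (fun y δ => conj (m y δ)) x)) := by
  simp only [lam, epsContract_apply, jac, ← sum_sub_distrib]
  congr! 5
  ring

theorem lam_gauge_invariant {l m n : Pt → Fin 4 → ℂ} {f : Pt → ℂ} {x : Pt} {E : ℂ}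
    (hE : conj E * E = 1) (hl_real : ∀ y δ, conj (l y δ) = l y δ)
    (hl : ∀ δ, DifferentiableAt ℝ (fun y => l y δ) x)
    (hm : ∀ δ, DifferentiableAt ℝ (fun y => m y δ) x) (hf : DifferentiableAt ℝ f x) :
    lam l (fun y α => E * m y α + f y * l y α)
      (fun y α => n y α + f y * conj E * conj (m y α) + conj (f y) * E * m y α
        + (Complex.normSq (f y) : ℂ) * l y α) x
      = lam l m n x := by
  have hm_conj (δ) : DifferentiableAt ℝ (fun y => conj (m y δ)) x := (hm δ).star
  have hf_conj : DifferentiableAt ℝ (fun y => conj (f y)) x := hf.star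
  have hconj : (fun y δ => conj (E * m y δ + f y * l y δ))
      = fun y δ => conj E * conj (m y δ) + conj (f y) * l y δ := by
    simp only [map_add, map_mul, hl_real]
  rw [lam_eq_epsContract, lam_eq_epsContract, hconj, jac_const_mul_add_mul E hm hl hf,
    jac_const_mul_add_mul (conj E) hm_conj hl hf_conj]
  set mbar : Fin 4 → ℂ := fun β => conj (m x β)
  have hn_pt : (fun α => n x α + f x * conj E * conj (m x α) + conj (f x) * E * m x α
      + (Complex.normSq (f x) : ℂ) * l x α)
      = n x + (f x * conj E) • mbar + (conj (f x) * E) • m x + (Complex.normSq (f x) : ℂ) • l x :=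
    rfl
  have hmbar : (fun β => conj (E * m x β + f x * l x β)) = conj E • mbar + conj (f x) • l x := by
    funext β
    simp [mbar, hl_real]
  have hm_pt : (fun α => E * m x α + f x * l x α) = E • m x + f x • l x := rfl
  rw [hn_pt, hmbar, hm_pt]
  simp only [map_add, map_smul, LinearMap.add_apply, LinearMap.smul_apply, epsContract_self,
    epsContract_outer_self, LinearMap.zero_apply, smul_eq_mul, mul_zero, add_zero]
  linear_combination (-(1 / 6) * (epsContract (l x) mbar (jac m x)
    + epsContract (l x) (m x) (jac (fun y δ => conj (m y δ)) x))) * hE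

theorem conj_exp_I_mul_mul_self (φ : ℝ) :
    conj (Complex.exp (Complex.I * φ)) * Complex.exp (Complex.I * φ) = 1 := by
  rw [← Complex.exp_conj, ← Complex.exp_add]
  simp

theorem weyl_teleparallel_gauge_invariance_general
    (U : Set Pt) (hU : IsOpen U) (ϑ : Fin 4 → Pt → Fin 4 → ℝ)
    (hreg : ∀ j, ContDiffOn ℝ 1 (ϑ j) U)
    (φ : ℝ) (f : Pt → ℂ) (hf : ContDiffOn ℝ 1 f U) :
    ∀ x ∈ U,
      lam (fun y α => lC ϑ y α)
        (fun y α => Complex.exp (Complex.I * φ) * mC ϑ y α + f y * lC ϑ y α)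
        (fun y α => nC ϑ y α
          + f y * Complex.exp (-(Complex.I * φ)) * (starRingEnd ℂ) (mC ϑ y α)
          + (starRingEnd ℂ) (f y) * Complex.exp (Complex.I * φ) * mC ϑ y α
          + (Complex.normSq (f y) : ℂ) * lC ϑ y α) x
      = lam (fun y α => lC ϑ y α) (fun y α => mC ϑ y α) (fun y α => nC ϑ y α) x := by
  intro x hx
  have hϑ (j α) : DifferentiableAt ℝ (fun y => ϑ j y α) x := differentiableAt_pi.mp
    (((hreg j).contDiffAt (hU.mem_nhds hx)).differentiableAt one_ne_zero) α
  have hfx : DifferentiableAt ℝ f x :=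
    (hf.contDiffAt (hU.mem_nhds hx)).differentiableAt one_ne_zero
  have hl (δ) : DifferentiableAt ℝ (fun y => lC ϑ y δ) x := by
    unfold lC; fun_prop
  have hm (δ) : DifferentiableAt ℝ (fun y => mC ϑ y δ) x := by
    unfold mC; fun_prop
  have hl_real (y δ) : conj (lC ϑ y δ) = lC ϑ y δ := by
    simp [lC, Complex.conj_ofReal]
  have hE : Complex.exp (-(Complex.I * φ)) = conj (Complex.exp (Complex.I * φ)) := by
    rw [← Complex.exp_conj, map_mul, Complex.conj_I, Complex.conj_ofReal, neg_mul]
  rw [hE]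
  exact lam_gauge_invariant (conj_exp_I_mul_mul_self φ) hl_real hl hm hfx

/-- Theorem 1 of the paper: the teleparallel Lagrangian density is invariant under the
action of the gauge group H: l̃ := l, m̃ := e^{iφ} m + f l,
ñ := n + f e^{−iφ} m̄ + f̄ e^{iφ} m + |f|² l. -/
theorem weyl_teleparallel_gauge_invariance
    (U : Set Pt) (hU : IsOpen U) (ϑ : Fin 4 → Pt → Fin 4 → ℝ)
    (hreg : ∀ j, ContDiffOn ℝ 1 (ϑ j) U)
    (hdet : ∀ x ∈ U, 0 < cofDet ϑ x)
    (φ : ℝ) (f : Pt → ℂ) (hf : ContDiffOn ℝ 1 f U) :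
    ∀ x ∈ U,
      lam (fun y α => lC ϑ y α)
        (fun y α => Complex.exp (Complex.I * φ) * mC ϑ y α + f y * lC ϑ y α)
        (fun y α => nC ϑ y α
          + f y * Complex.exp (-(Complex.I * φ)) * (starRingEnd ℂ) (mC ϑ y α)
          + (starRingEnd ℂ) (f y) * Complex.exp (Complex.I * φ) * mC ϑ y α
          + (Complex.normSq (f y) : ℂ) * lC ϑ y α) x
      = lam (fun y α => lC ϑ y α) (fun y α => mC ϑ y α) (fun y α => nC ϑ y α) x :=
  weyl_teleparallel_gauge_invariance_general U hU ϑ hreg φ f hf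
end
end

section
/- Conformal covariance of axial torsion: for every continuously differentiable coframe ϑ on U and every continuously differentiable function h : U → ℝ, the rescaled coframe ϑ̃^j := e^h ϑ^j satisfies T^ax(ϑ̃)_{αβγ} = e^{2h} T^ax(ϑ)_{αβγ} at every point of U; in particular no derivatives of h appear. -/
noncomputable section

open scoped Matrix

/-! The derivative terms of `d(f ϑᵏ) = f dϑᵏ + df ∧ ϑᵏ` contribute `o_{jk} ϑʲ ∧ df ∧ ϑᵏ` to `f² T^ax(ϑ)`,
which vanishes because `o` is symmetric in `j, k` while `ϑʲ ∧ ϑᵏ` is antisymmetric. So `T^ax(fϑ) = f² T^ax(ϑ)`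
for every differentiable `f`, and `f = e^h` gives the theorem. -/

lemma pd_mul {f g : Pt → ℝ} {x : Pt} (α : Fin 4) (hf : DifferentiableAt ℝ f x)
    (hg : DifferentiableAt ℝ g x) :
    pd α (fun y => f y * g y) x = f x * pd α g x + pd α f x * g x := by
  simp only [pd, fderiv_fun_mul hf hg, add_apply, smul_apply, smul_eq_mul]
  ring

lemma dcov_mul_left {f : Pt → ℝ} {u : Pt → Fin 4 → ℝ} {x : Pt} (α β : Fin 4)
    (hf : DifferentiableAt ℝ f x) (hu : ∀ δ, DifferentiableAt ℝ (fun y => u y δ) x) :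
    dcov (fun y δ => f y * u y δ) α β x
      = f x * dcov u α β x + (pd α f x * u x β - pd β f x * u x α) := by
  simp only [dcov, pd_mul _ hf (hu _)]
  ring

lemma oM_symm (j k : Fin 4) : oM j k = oM k j := by
  unfold oM
  split_ifs <;> simp_all

/-- The components of `o_{jk} vʲ ∧ a ∧ vᵏ` vanish for symmetric `o`. -/
lemma sum_symm_mul_wedge_eq_zero {ι κ : Type*} [Fintype ι] (o : ι → ι → ℝ)
    (ho : ∀ j k, o j k = o k j) (v : ι → κ → ℝ) (a : κ → ℝ) (α β γ : κ) :
    ∑ j, ∑ k, o j k *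
      (v j α * (a β * v k γ - a γ * v k β) + v j β * (a γ * v k α - a α * v k γ)
        + v j γ * (a α * v k β - a β * v k α)) = 0 := by
  -- exchanging `j` and `k` negates each summand
  refine eq_zero_of_neg_eq ?_
  conv_rhs => rw [Finset.sum_comm]
  simp only [← Finset.sum_neg_distrib]
  refine Finset.sum_congr rfl fun j _ => Finset.sum_congr rfl fun k _ => ?_
  rw [ho]
  ring

theorem Tax_mul_left {ϑ : Fin 4 → Pt → Fin 4 → ℝ} {f : Pt → ℝ} {x : Pt} (α β γ : Fin 4)
    (hf : DifferentiableAt ℝ f x) (hϑ : ∀ j δ, DifferentiableAt ℝ (fun y => ϑ j y δ) x) :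
    Tax (fun j y δ => f y * ϑ j y δ) α β γ x = f x ^ 2 * Tax ϑ α β γ x := by
  have hwedge := sum_symm_mul_wedge_eq_zero oM oM_symm (fun j => ϑ j x) (fun δ => pd δ f x) α β γ
  simp only [Tax, dcov_mul_left _ _ hf (hϑ _)]
  calc (1 / 3 : ℝ) * ∑ j, ∑ k, oM j k *
        (f x * ϑ j x α * (f x * dcov (ϑ k) β γ x + (pd β f x * ϑ k x γ - pd γ f x * ϑ k x β))
          + f x * ϑ j x β * (f x * dcov (ϑ k) γ α x + (pd γ f x * ϑ k x α - pd α f x * ϑ k x γ))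
          + f x * ϑ j x γ * (f x * dcov (ϑ k) α β x + (pd α f x * ϑ k x β - pd β f x * ϑ k x α)))
      = (1 / 3 : ℝ) * ∑ j, ∑ k, (f x ^ 2 * (oM j k * (ϑ j x α * dcov (ϑ k) β γ x
          + ϑ j x β * dcov (ϑ k) γ α x + ϑ j x γ * dcov (ϑ k) α β x))
          + f x * (oM j k * (ϑ j x α * (pd β f x * ϑ k x γ - pd γ f x * ϑ k x β)
            + ϑ j x β * (pd γ f x * ϑ k x α - pd α f x * ϑ k x γ)
            + ϑ j x γ * (pd α f x * ϑ k x β - pd β f x * ϑ k x α)))) := by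
        congr 1
        refine Finset.sum_congr rfl fun j _ => Finset.sum_congr rfl fun k _ => ?_
        ring
    _ = f x ^ 2 * Tax ϑ α β γ x := by
        simp only [Finset.sum_add_distrib, ← Finset.mul_sum, hwedge, Tax]
        ring

theorem axial_torsion_conformal_covariance_general
    (U : Set Pt) (hU : IsOpen U) (ϑ : Fin 4 → Pt → Fin 4 → ℝ)
    (hreg : ∀ j, ContDiffOn ℝ 1 (ϑ j) U)
    (h : Pt → ℝ) (hh : ContDiffOn ℝ 1 h U) :
    ∀ x ∈ U, ∀ α β γ : Fin 4,
      Tax (fun j y δ => Real.exp (h y) * ϑ j y δ) α β γ x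
        = Real.exp (2 * h x) * Tax ϑ α β γ x := by
  intro x hx α β γ
  have hdiff {E : Type} [NormedAddCommGroup E] [NormedSpace ℝ E] {g : Pt → E}
      (hg : ContDiffOn ℝ 1 g U) : DifferentiableAt ℝ g x :=
    (hg.contDiffAt (hU.mem_nhds hx)).differentiableAt one_ne_zero
  have hϑ j : DifferentiableAt ℝ (ϑ j) x := hdiff (hreg j)
  rw [Tax_mul_left _ _ _ (hdiff hh).exp fun j => differentiableAt_pi.1 (hϑ j),
    ← Real.exp_nat_mul]
  norm_num

/-- Conformal covariance of axial torsion: ϑ̃^j := e^h ϑ^j satisfies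
T^ax(ϑ̃)_{αβγ} = e^{2h} T^ax(ϑ)_{αβγ}. -/
theorem axial_torsion_conformal_covariance
    (U : Set Pt) (hU : IsOpen U) (ϑ : Fin 4 → Pt → Fin 4 → ℝ)
    (hreg : ∀ j, ContDiffOn ℝ 1 (ϑ j) U)
    (hdet : ∀ x ∈ U, 0 < cofDet ϑ x)
    (h : Pt → ℝ) (hh : ContDiffOn ℝ 1 h U) :
    ∀ x ∈ U, ∀ α β γ : Fin 4,
      Tax (fun j y δ => Real.exp (h y) * ϑ j y δ) α β γ x
        = Real.exp (2 * h x) * Tax ϑ α β γ x :=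
  axial_torsion_conformal_covariance_general U hU ϑ hreg h hh
end
end

section
/- Theorem 3 (gauge invariance of the modified teleparallel Lagrangian): Let ϑ be a continuously differentiable coframe on U and let s : U → (0,∞) be continuously differentiable. Then the density s·λ(l,m,n) of the modified teleparallel Lagrangian L̃_tele(ϑ,s) := s·l∧T^ax is invariant under the extended gauge group H̃; explicitly: (i) for every constant φ ∈ ℝ and continuously differentiable f : U → ℂ, s·λ(l, e^{iφ} m + f l, n + f e^{−iφ} m̄ + f̄ e^{iφ} m + |f|² l) = s·λ(l, m, n); and (ii) for every continuously differentiable k : U → ℝ, (e^{k} s)·λ(e^{−k} l, m, e^{k} n) = s·λ(l, m, n), both at every point of U. -/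
noncomputable section

open scoped Matrix

/-! The density is a contraction of `ε` with `l ⊗ (n ⊗ dl − m̄ ⊗ dm − m ⊗ dm̄)`, so only the
values and first derivatives of `l, m, m̄, n` at the point matter. Under both gauge
transformations the difference between the new and the old contraction is a sum of terms in
which `l` occupies two slots of `ε` (either directly, or through the `df ∧ l` part of
`d(f l)`), and these vanish by antisymmetry. For the null rotation one also uses that `l` is
real and `e^{iφ} e^{−iφ} = 1`; for the boost the factors `e^{−k}` of `l` and `e^{k}` of `n`
cancel against the factor `e^{k}` of `s`. -/

section Antisymmetry

open Equiv

theorem sum_sum_eq_zero_of_antisymm {ι M : Type*} [Fintype ι] [AddCommGroup M]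
    [IsAddTorsionFree M] (g : ι → ι → M) (h : ∀ i j, g j i = -g i j) :
    ∑ i, ∑ j, g i j = 0 := by
  rw [← self_eq_neg]
  calc ∑ i, ∑ j, g i j = ∑ j, ∑ i, g i j := Finset.sum_comm
    _ = ∑ j, ∑ i, -g j i := by simp only [← h]
    _ = -∑ i, ∑ j, g i j := by simp only [Finset.sum_neg_distrib]

def epsOf (w : Fin 4 → Fin 4) : ℝ :=
  ∑ σ : Perm (Fin 4), if ⇑σ = w then ((Perm.sign σ : ℤ) : ℝ) else 0

theorem eps_eq_epsOf (a b c d : Fin 4) : eps a b c d = epsOf ![a, b, c, d] := by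
  unfold eps epsOf
  refine Finset.sum_congr rfl fun σ _ => if_congr ?_ rfl rfl
  rw [funext_iff, Fin.forall_fin_succ, Fin.forall_fin_succ, Fin.forall_fin_succ, Fin.forall_fin_one]
  rfl

theorem epsOf_comp_perm (w : Fin 4 → Fin 4) (τ : Perm (Fin 4)) :
    epsOf (w ∘ τ) = (Perm.sign τ : ℤ) * epsOf w := by
  unfold epsOf
  rw [Finset.mul_sum]
  refine Fintype.sum_equiv (Equiv.mulRight τ⁻¹) _ _ fun σ => ?_
  have hcomp : ⇑σ = w ∘ τ ↔ ⇑(σ * τ⁻¹) = w := by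
    rw [Perm.coe_mul, Perm.coe_inv, Equiv.comp_symm_eq]
  rw [coe_mulRight]
  by_cases hσ : ⇑σ = w ∘ τ
  · rw [if_pos hσ, if_pos (hcomp.mp hσ), Perm.sign_mul, Perm.sign_inv]
    rcases Int.units_eq_one_or (Perm.sign τ) with hτ | hτ <;> simp [hτ]
  · rw [if_neg hσ, if_neg (mt hcomp.mpr hσ), mul_zero]

theorem eps_swap_01 (a b c d : Fin 4) : eps b a c d = -eps a b c d := by
  have hw : ![b, a, c, d] = ![a, b, c, d] ∘ Equiv.swap 0 1 := by
    ext i; fin_cases i <;> rfl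
  rw [eps_eq_epsOf, eps_eq_epsOf, hw, epsOf_comp_perm, Perm.sign_swap (by decide)]
  simp

theorem eps_swap_03 (a b c d : Fin 4) : eps d b c a = -eps a b c d := by
  have hw : ![d, b, c, a] = ![a, b, c, d] ∘ Equiv.swap 0 3 := by
    ext i; fin_cases i <;> rfl
  rw [eps_eq_epsOf, eps_eq_epsOf, hw, epsOf_comp_perm, Perm.sign_swap (by decide)]
  simp

theorem sum_eps_mul_mul_self_01 (L : Fin 4 → ℂ) (X : Fin 4 → Fin 4 → ℂ) :
    ∑ a, ∑ b, ∑ c, ∑ d, (eps a b c d : ℂ) * (L a * L b * X c d) = 0 :=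
  sum_sum_eq_zero_of_antisymm _ fun a b => by
    simp only [eps_swap_01 a b, Complex.ofReal_neg, ← Finset.sum_neg_distrib]
    exact Finset.sum_congr rfl fun c _ => Finset.sum_congr rfl fun d _ => by ring

theorem sum_eps_mul_mul_self_03 (L : Fin 4 → ℂ) (Y : Fin 4 → Fin 4 → ℂ) :
    ∑ a, ∑ b, ∑ c, ∑ d, (eps a b c d : ℂ) * (L a * L d * Y b c) = 0 := by
  rw [Finset.sum_comm]
  refine Finset.sum_eq_zero fun b _ => ?_
  rw [Finset.sum_comm]
  refine Finset.sum_eq_zero fun c _ => sum_sum_eq_zero_of_antisymm _ fun a d => ?_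
  rw [eps_swap_03 a b c d, Complex.ofReal_neg]
  ring

end Antisymmetry

/-- `λ` as a polynomial in the values `L, M, Mb, N` of `l, m, m̄, n` at a point and their
first derivatives `DL γ δ = ∂_γ l_δ`, `DM`, `DMb` there, without the factor `1/6`. -/
def lamJet (L M Mb N : Fin 4 → ℂ) (DL DM DMb : Fin 4 → Fin 4 → ℂ) : ℂ :=
  ∑ α, ∑ β, ∑ γ, ∑ δ, (eps α β γ δ : ℂ) * L α *
    (N β * DL γ δ - Mb β * DM γ δ - M β * DMb γ δ)

theorem lam_eq_lamJet (l m n : Pt → Fin 4 → ℂ) (x : Pt) :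
    lam l m n x = 1 / 6 * lamJet (l x) (m x) (fun β => starRingEnd ℂ (m x β)) (n x)
      (fun γ δ => pd γ (fun y => l y δ) x) (fun γ δ => pd γ (fun y => m y δ) x)
      (fun γ δ => pd γ (fun y => starRingEnd ℂ (m y δ)) x) :=
  rfl

theorem lamJet_null_rotation (A B F Fb : ℂ) (hAB : A * B = 1)
    (L M Mb N DF DFb : Fin 4 → ℂ) (DL DM DMb : Fin 4 → Fin 4 → ℂ) :
    lamJet L (fun β => A * M β + F * L β) (fun β => B * Mb β + Fb * L β)
        (fun β => N β + F * B * Mb β + Fb * A * M β + F * Fb * L β) DL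
        (fun γ δ => A * DM γ δ + DF γ * L δ + F * DL γ δ)
        (fun γ δ => B * DMb γ δ + DFb γ * L δ + Fb * DL γ δ)
      = lamJet L M Mb N DL DM DMb := by
  unfold lamJet
  calc _ = ∑ a, ∑ b, ∑ c, ∑ d,
        ((eps a b c d : ℂ) * L a * (N b * DL c d - Mb b * DM c d - M b * DMb c d)
          + (eps a b c d : ℂ) * (L a * L b * (-(F * Fb * DL c d) - Fb * A * DM c d
              - F * B * DMb c d - (Fb * DF c + F * DFb c) * L d))
          + (eps a b c d : ℂ) * (L a * L d * (-(B * DF c * Mb b) - A * DFb c * M b))) := by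
        refine Finset.sum_congr rfl fun a _ => Finset.sum_congr rfl fun b _ =>
          Finset.sum_congr rfl fun c _ => Finset.sum_congr rfl fun d _ => ?_
        linear_combination (-(eps a b c d : ℂ) * L a * (Mb b * DM c d + M b * DMb c d)) * hAB
    _ = _ := by
        simp only [Finset.sum_add_distrib, sum_eps_mul_mul_self_01, sum_eps_mul_mul_self_03,
          add_zero]

theorem lamJet_boost (K K' : ℂ) (hK : K * K' = 1) (DK L M Mb N : Fin 4 → ℂ)
    (DL DM DMb : Fin 4 → Fin 4 → ℂ) :
    lamJet (fun α => K * L α) M Mb (fun β => K' * N β) (fun γ δ => DK γ * L δ + K * DL γ δ)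
        DM DMb
      = K * lamJet L M Mb N DL DM DMb := by
  unfold lamJet
  calc _ = ∑ a, ∑ b, ∑ c, ∑ d,
        (K * ((eps a b c d : ℂ) * L a * (N b * DL c d - Mb b * DM c d - M b * DMb c d))
          + (eps a b c d : ℂ) * (L a * L d * (N b * DK c))) := by
        refine Finset.sum_congr rfl fun a _ => Finset.sum_congr rfl fun b _ =>
          Finset.sum_congr rfl fun c _ => Finset.sum_congr rfl fun d _ => ?_
        linear_combination ((eps a b c d : ℂ) * L a * N b * (DK c * L d + K * DL c d)) * hK
    _ = _ := by
        simp only [Finset.sum_add_distrib, sum_eps_mul_mul_self_03, add_zero, Finset.mul_sum]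

section PartialDerivative

variable {x : Pt} (γ : Fin 4)

theorem pd_add {E : Type*} [NormedAddCommGroup E] [NormedSpace ℝ E] {u v : Pt → E}
    (hu : DifferentiableAt ℝ u x) (hv : DifferentiableAt ℝ v x) :
    pd γ (fun y => u y + v y) x = pd γ u x + pd γ v x := by
  simp [pd, fderiv_fun_add hu hv]

theorem pd_const_mul {𝔸 : Type*} [NormedRing 𝔸] [NormedAlgebra ℝ 𝔸] {u : Pt → 𝔸}
    (hu : DifferentiableAt ℝ u x) (c : 𝔸) :
    pd γ (fun y => c * u y) x = c * pd γ u x := by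
  simp [pd, fderiv_const_mul hu c]

theorem pd_mul_s3 {𝔸 : Type*} [NormedCommRing 𝔸] [NormedAlgebra ℝ 𝔸] {u v : Pt → 𝔸}
    (hu : DifferentiableAt ℝ u x) (hv : DifferentiableAt ℝ v x) :
    pd γ (fun y => u y * v y) x = pd γ u x * v x + u x * pd γ v x := by
  simp [pd, fderiv_fun_mul hu hv, add_comm, mul_comm]

end PartialDerivative

theorem lam_null_rotation (l m n : Pt → Fin 4 → ℂ) (x : Pt)
    (hl_real : ∀ y α, starRingEnd ℂ (l y α) = l y α)
    (hl : ∀ δ, DifferentiableAt ℝ (fun y => l y δ) x)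
    (hm : ∀ δ, DifferentiableAt ℝ (fun y => m y δ) x)
    (φ : ℝ) (f : Pt → ℂ) (hf : DifferentiableAt ℝ f x) :
    lam l (fun y α => Complex.exp (Complex.I * φ) * m y α + f y * l y α)
        (fun y α => n y α
          + f y * Complex.exp (-(Complex.I * φ)) * starRingEnd ℂ (m y α)
          + starRingEnd ℂ (f y) * Complex.exp (Complex.I * φ) * m y α
          + (Complex.normSq (f y) : ℂ) * l y α) x
      = lam l m n x := by
  set A := Complex.exp (Complex.I * φ)
  set B := Complex.exp (-(Complex.I * φ))
  have hconjA : starRingEnd ℂ A = B := by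
    rw [← Complex.exp_conj]
    simp [B, Complex.conj_ofReal]
  have hAB : A * B = 1 := by rw [← Complex.exp_add, add_neg_cancel, Complex.exp_zero]
  have hmb : ∀ δ, DifferentiableAt ℝ (fun y => starRingEnd ℂ (m y δ)) x := fun δ => (hm δ).star
  have hfb : DifferentiableAt ℝ (fun y => starRingEnd ℂ (f y)) x := hf.star
  have hDm : ∀ γ δ, pd γ (fun y => A * m y δ + f y * l y δ) x
      = A * pd γ (fun y => m y δ) x + pd γ f x * l x δ + f x * pd γ (fun y => l y δ) x := by
    intro γ δ
    rw [pd_add γ ((hm δ).const_mul A) (hf.fun_mul (hl δ)), pd_const_mul γ (hm δ), pd_mul_s3 γ hf (hl δ),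
      add_assoc]
  have hDmb : ∀ γ δ, pd γ (fun y => B * starRingEnd ℂ (m y δ) + starRingEnd ℂ (f y) * l y δ) x
      = B * pd γ (fun y => starRingEnd ℂ (m y δ)) x + pd γ (fun y => starRingEnd ℂ (f y)) x * l x δ
        + starRingEnd ℂ (f x) * pd γ (fun y => l y δ) x := by
    intro γ δ
    rw [pd_add γ ((hmb δ).const_mul B) (hfb.fun_mul (hl δ)), pd_const_mul γ (hmb δ),
      pd_mul_s3 γ hfb (hl δ), add_assoc]
  simp only [lam_eq_lamJet, map_add, map_mul, hconjA, hl_real, hDm, hDmb, ← Complex.mul_conj]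
  rw [lamJet_null_rotation A B (f x) (starRingEnd ℂ (f x)) hAB]

theorem lam_boost (l m n : Pt → Fin 4 → ℂ) (x : Pt)
    (hl : ∀ δ, DifferentiableAt ℝ (fun y => l y δ) x)
    (k : Pt → ℝ) (hk : DifferentiableAt ℝ k x) :
    lam (fun y α => (Real.exp (-(k y)) : ℂ) * l y α) m (fun y α => (Real.exp (k y) : ℂ) * n y α) x
      = Real.exp (-(k x)) * lam l m n x := by
  have hK : DifferentiableAt ℝ (fun y => (Real.exp (-(k y)) : ℂ)) x :=
    Complex.ofRealCLM.differentiableAt.comp x hk.neg.exp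
  have hKK' : (Real.exp (-(k x)) : ℂ) * Real.exp (k x) = 1 := by
    rw [← Complex.ofReal_mul, ← Real.exp_add, neg_add_cancel, Real.exp_zero, Complex.ofReal_one]
  simp only [lam_eq_lamJet, pd_mul_s3 _ hK (hl _)]
  rw [lamJet_boost _ _ hKK']
  ring

theorem modified_teleparallel_gauge_invariance_general
    (U : Set Pt) (hU : IsOpen U) (ϑ : Fin 4 → Pt → Fin 4 → ℝ)
    (hreg : ∀ j, ContDiffOn ℝ 1 (ϑ j) U)
    (s : Pt → ℝ) :
    (∀ (φ : ℝ) (f : Pt → ℂ), ContDiffOn ℝ 1 f U → ∀ x ∈ U,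
      (s x : ℂ) * lam (fun y α => lC ϑ y α)
        (fun y α => Complex.exp (Complex.I * φ) * mC ϑ y α + f y * lC ϑ y α)
        (fun y α => nC ϑ y α
          + f y * Complex.exp (-(Complex.I * φ)) * (starRingEnd ℂ) (mC ϑ y α)
          + (starRingEnd ℂ) (f y) * Complex.exp (Complex.I * φ) * mC ϑ y α
          + (Complex.normSq (f y) : ℂ) * lC ϑ y α) x
      = (s x : ℂ) * lam (fun y α => lC ϑ y α) (fun y α => mC ϑ y α) (fun y α => nC ϑ y α) x)
    ∧
    (∀ (k : Pt → ℝ), ContDiffOn ℝ 1 k U → ∀ x ∈ U,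
      ((Real.exp (k x) * s x : ℝ) : ℂ) * lam (fun y α => (Real.exp (-(k y)) : ℂ) * lC ϑ y α)
        (fun y α => mC ϑ y α)
        (fun y α => (Real.exp (k y) : ℂ) * nC ϑ y α) x
      = (s x : ℂ) * lam (fun y α => lC ϑ y α) (fun y α => mC ϑ y α) (fun y α => nC ϑ y α) x) := by
  have hdiff {E : Type} [NormedAddCommGroup E] [NormedSpace ℝ E] {g : Pt → E} {x : Pt}
      (hg : ContDiffOn ℝ 1 g U) (hx : x ∈ U) : DifferentiableAt ℝ g x :=
    (hg.differentiableOn one_ne_zero).differentiableAt (hU.mem_nhds hx)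
  have hϑ {x : Pt} (hx : x ∈ U) (j δ : Fin 4) : DifferentiableAt ℝ (fun y => (ϑ j y δ : ℂ)) x :=
    Complex.ofRealCLM.differentiableAt.comp x (hdiff (contDiffOn_pi.mp (hreg j) δ) hx)
  have hl {x : Pt} (hx : x ∈ U) (δ : Fin 4) : DifferentiableAt ℝ (fun y => lC ϑ y δ) x :=
    (hϑ hx 0 δ).add (hϑ hx 3 δ)
  refine ⟨fun φ f hf x hx => ?_, fun k hk x hx => ?_⟩
  · have hm (δ : Fin 4) : DifferentiableAt ℝ (fun y => mC ϑ y δ) x :=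
      (hϑ hx 1 δ).add ((hϑ hx 2 δ).const_mul Complex.I)
    have hl_real (y : Pt) (α : Fin 4) : starRingEnd ℂ (lC ϑ y α) = lC ϑ y α := by
      simp [lC, Complex.conj_ofReal]
    rw [lam_null_rotation _ _ _ x hl_real (hl hx) hm φ f (hdiff hf hx)]
  · rw [lam_boost _ _ _ x (hl hx) k (hdiff hk hx), Complex.ofReal_mul]
    have hexp : (Real.exp (k x) : ℂ) * Real.exp (-(k x)) = 1 := by
      rw [← Complex.ofReal_mul, ← Real.exp_add, add_neg_cancel, Real.exp_zero, Complex.ofReal_one]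
    linear_combination (s x : ℂ) * lam (fun y α => lC ϑ y α) (fun y α => mC ϑ y α)
      (fun y α => nC ϑ y α) x * hexp

/-- Theorem 3 of the paper: the density s·λ(l,m,n) of the modified teleparallel Lagrangian
is invariant under the extended gauge group H̃. -/
theorem modified_teleparallel_gauge_invariance
    (U : Set Pt) (hU : IsOpen U) (ϑ : Fin 4 → Pt → Fin 4 → ℝ)
    (hreg : ∀ j, ContDiffOn ℝ 1 (ϑ j) U)
    (hdet : ∀ x ∈ U, 0 < cofDet ϑ x)
    (s : Pt → ℝ) (hs : ContDiffOn ℝ 1 s U) (hspos : ∀ x ∈ U, 0 < s x) :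
    (∀ (φ : ℝ) (f : Pt → ℂ), ContDiffOn ℝ 1 f U → ∀ x ∈ U,
      (s x : ℂ) * lam (fun y α => lC ϑ y α)
        (fun y α => Complex.exp (Complex.I * φ) * mC ϑ y α + f y * lC ϑ y α)
        (fun y α => nC ϑ y α
          + f y * Complex.exp (-(Complex.I * φ)) * (starRingEnd ℂ) (mC ϑ y α)
          + (starRingEnd ℂ) (f y) * Complex.exp (Complex.I * φ) * mC ϑ y α
          + (Complex.normSq (f y) : ℂ) * lC ϑ y α) x
      = (s x : ℂ) * lam (fun y α => lC ϑ y α) (fun y α => mC ϑ y α) (fun y α => nC ϑ y α) x)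
    ∧
    (∀ (k : Pt → ℝ), ContDiffOn ℝ 1 k U → ∀ x ∈ U,
      ((Real.exp (k x) * s x : ℝ) : ℂ) * lam (fun y α => (Real.exp (-(k y)) : ℂ) * lC ϑ y α)
        (fun y α => mC ϑ y α)
        (fun y α => (Real.exp (k y) : ℂ) * nC ϑ y α) x
      = (s x : ℂ) * lam (fun y α => lC ϑ y α) (fun y α => mC ϑ y α) (fun y α => nC ϑ y α) x) :=
  modified_teleparallel_gauge_invariance_general U hU ϑ hreg s
end
end

section
/- Conformal invariance of the modified teleparallel Lagrangian: for every continuously differentiable coframe ϑ on U, every continuously differentiable s : U → (0,∞) and every continuously differentiable h : U → ℝ, the rescaled data ϑ̃^j := e^h ϑ^j and s̃ := e^{−3h} s satisfy s̃·λ(l̃, m̃, ñ) = s·λ(l, m, n) at every point of U, where l̃ := ϑ̃⁰ + ϑ̃³ = e^h l, m̃ := ϑ̃¹ + iϑ̃² = e^h m, ñ := ϑ̃⁰ − ϑ̃³ = e^h n. -/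
noncomputable section

open scoped Matrix

/-! Rescaling the coframe by a real function `φ` (here `e^h`) gives
`∂_γ(φ u) = φ ∂_γ u + (∂_γ φ) u`. The terms carrying `∂φ` contract `ε^{αβγδ}` with `l_α l_δ` and
with `m̄_β m_δ + m_β m̄_δ`, which are symmetric in two of its slots, so they drop out: `λ` is
homogeneous of degree 3 under real rescaling, and the weight `e^{-3h}` of `s̃` cancels the
factor `e^{3h}`. -/

open Finset

theorem sum_fin_four_nested_eq_sum_pi {M : Type*} [AddCommMonoid M]
    (f : Fin 4 → Fin 4 → Fin 4 → Fin 4 → M) :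
    ∑ a, ∑ b, ∑ c, ∑ d, f a b c d = ∑ v : Fin 4 → Fin 4, f (v 0) (v 1) (v 2) (v 3) := by
  simp only [← (Fin.consEquiv fun _ => Fin 4).sum_comp, Fintype.sum_prod_type, Fintype.sum_unique]
  rfl

theorem eps_eq_sum_perm (v : Fin 4 → Fin 4) :
    eps (v 0) (v 1) (v 2) (v 3) =
      ∑ σ : Equiv.Perm (Fin 4), if ⇑σ = v then ((Equiv.Perm.sign σ : ℤ) : ℝ) else 0 := by
  unfold eps
  refine sum_congr rfl fun σ _ => if_congr ?_ rfl rfl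
  rw [funext_iff, Fin.forall_fin_succ, Fin.forall_fin_succ, Fin.forall_fin_succ, Fin.forall_fin_one]
  rfl

theorem eps_comp_swap (v : Fin 4 → Fin 4) {i j : Fin 4} (hij : i ≠ j) :
    eps (v (Equiv.swap i j 0)) (v (Equiv.swap i j 1)) (v (Equiv.swap i j 2))
      (v (Equiv.swap i j 3)) = -eps (v 0) (v 1) (v 2) (v 3) := by
  refine (eps_eq_sum_perm (v ∘ Equiv.swap i j)).trans ?_
  rw [eps_eq_sum_perm, ← sum_neg_distrib]
  refine Fintype.sum_equiv (Equiv.mulRight (Equiv.swap i j)) _ _ fun σ => ?_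
  have hsign : Equiv.Perm.sign (σ * Equiv.swap i j) = -Equiv.Perm.sign σ := by
    rw [Equiv.Perm.sign_mul, Equiv.Perm.sign_swap hij, mul_neg_one]
  have hcoe : (⇑(σ * Equiv.swap i j) = v) ↔ ⇑σ = v ∘ Equiv.swap i j := by
    rw [Equiv.Perm.coe_mul, ← Equiv.symm_swap, Equiv.comp_symm_eq, Equiv.symm_swap]
  simp only [Equiv.coe_mulRight, hsign, hcoe]
  split_ifs <;> simp

theorem sum_eps_mul_eq_zero_of_swap_invariant (T : Fin 4 → Fin 4 → Fin 4 → Fin 4 → ℂ)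
    {i j : Fin 4} (hij : i ≠ j)
    (hT : ∀ v : Fin 4 → Fin 4, T (v (Equiv.swap i j 0)) (v (Equiv.swap i j 1))
      (v (Equiv.swap i j 2)) (v (Equiv.swap i j 3)) = T (v 0) (v 1) (v 2) (v 3)) :
    ∑ a, ∑ b, ∑ c, ∑ d, (eps a b c d : ℂ) * T a b c d = 0 := by
  rw [sum_fin_four_nested_eq_sum_pi]
  set S := ∑ v : Fin 4 → Fin 4, (eps (v 0) (v 1) (v 2) (v 3) : ℂ) * T (v 0) (v 1) (v 2) (v 3)
  have hS : S = -S := calc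
    S = ∑ v : Fin 4 → Fin 4, (eps (v (Equiv.swap i j 0)) (v (Equiv.swap i j 1))
          (v (Equiv.swap i j 2)) (v (Equiv.swap i j 3)) : ℂ) *
          T (v (Equiv.swap i j 0)) (v (Equiv.swap i j 1)) (v (Equiv.swap i j 2))
            (v (Equiv.swap i j 3)) :=
      (((Equiv.swap i j).arrowCongr (Equiv.refl _)).sum_comp _).symm
    _ = -S := by
      simp only [eps_comp_swap _ hij, hT, Complex.ofReal_neg, neg_mul, sum_neg_distrib, S]
  exact self_eq_neg.mp hS

theorem sum_eps_mul_symm₀₃_eq_zero (u w c : Fin 4 → ℂ) :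
    ∑ a, ∑ b, ∑ g, ∑ d, (eps a b g d : ℂ) * (u a * w b * c g * u d) = 0 :=
  sum_eps_mul_eq_zero_of_swap_invariant _ (i := 0) (j := 3) (by decide) fun v => by
    simp only [Equiv.swap_apply_def, Fin.reduceEq, if_true, if_false]; ring

theorem sum_eps_mul_symm₁₃_eq_zero (u c p q : Fin 4 → ℂ) :
    ∑ a, ∑ b, ∑ g, ∑ d, (eps a b g d : ℂ) * (u a * c g * (p b * q d + q b * p d)) = 0 :=
  sum_eps_mul_eq_zero_of_swap_invariant _ (i := 1) (j := 3) (by decide) fun v => by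
    simp only [Equiv.swap_apply_def, Fin.reduceEq, if_true, if_false]; ring

theorem pd_smul {E : Type*} [NormedAddCommGroup E] [NormedSpace ℝ E] {φ : Pt → ℝ} {f : Pt → E}
    {x : Pt} (hφ : DifferentiableAt ℝ φ x) (hf : DifferentiableAt ℝ f x) (γ : Fin 4) :
    pd γ (fun y => φ y • f y) x = φ x • pd γ f x + pd γ φ x • f x := by
  simp only [pd, fderiv_fun_smul hφ hf, add_apply, smul_apply, ContinuousLinearMap.smulRight_apply]

theorem pd_ofReal_mul {φ : Pt → ℝ} {f : Pt → ℂ} {x : Pt} (hφ : DifferentiableAt ℝ φ x)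
    (hf : DifferentiableAt ℝ f x) (γ : Fin 4) :
    pd γ (fun y => (φ y : ℂ) * f y) x = φ x * pd γ f x + pd γ φ x * f x := by
  simpa only [Complex.real_smul] using pd_smul hφ hf γ

theorem lam_ofReal_mul {φ : Pt → ℝ} {l m : Pt → Fin 4 → ℂ} (n : Pt → Fin 4 → ℂ) {x : Pt}
    (hφ : DifferentiableAt ℝ φ x) (hl : ∀ δ, DifferentiableAt ℝ (fun y => l y δ) x)
    (hm : ∀ δ, DifferentiableAt ℝ (fun y => m y δ) x) :
    lam (fun y α => (φ y : ℂ) * l y α) (fun y α => (φ y : ℂ) * m y α)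
        (fun y α => (φ y : ℂ) * n y α) x = (φ x : ℂ) ^ 3 * lam l m n x := by
  set c : Fin 4 → ℂ := fun γ => ((pd γ φ x : ℝ) : ℂ)
  have hdl : ∀ γ δ, pd γ (fun y => (φ y : ℂ) * l y δ) x
      = φ x * pd γ (fun y => l y δ) x + c γ * l x δ := fun γ δ => pd_ofReal_mul hφ (hl δ) γ
  have hdm : ∀ γ δ, pd γ (fun y => (φ y : ℂ) * m y δ) x
      = φ x * pd γ (fun y => m y δ) x + c γ * m x δ := fun γ δ => pd_ofReal_mul hφ (hm δ) γ
  have hdmbar : ∀ γ δ, pd γ (fun y => starRingEnd ℂ ((φ y : ℂ) * m y δ)) x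
      = φ x * pd γ (fun y => starRingEnd ℂ (m y δ)) x + c γ * starRingEnd ℂ (m x δ) := by
    intro γ δ
    simp only [map_mul, Complex.conj_ofReal]
    exact pd_ofReal_mul hφ (by fun_prop) γ
  have hsummand : ∀ a b g d : Fin 4, (eps a b g d : ℂ) * (φ x * l x a) *
      (φ x * n x b * (φ x * pd g (fun y => l y d) x + c g * l x d)
        - φ x * starRingEnd ℂ (m x b) * (φ x * pd g (fun y => m y d) x + c g * m x d)
        - φ x * m x b * (φ x * pd g (fun y => starRingEnd ℂ (m y d)) x
            + c g * starRingEnd ℂ (m x d)))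
      = (φ x : ℂ) ^ 3 * ((eps a b g d : ℂ) * l x a *
          (n x b * pd g (fun y => l y d) x
            - starRingEnd ℂ (m x b) * pd g (fun y => m y d) x
            - m x b * pd g (fun y => starRingEnd ℂ (m y d)) x))
        + (φ x : ℂ) ^ 2 * ((eps a b g d : ℂ) * (l x a * n x b * c g * l x d))
        - (φ x : ℂ) ^ 2 * ((eps a b g d : ℂ) * (l x a * c g *
            (starRingEnd ℂ (m x b) * m x d + m x b * starRingEnd ℂ (m x d)))) := by
    intros; ring
  unfold lam
  simp only [hdl, hdm, hdmbar]
  simp only [map_mul, Complex.conj_ofReal, hsummand, sum_add_distrib, sum_sub_distrib, ← mul_sum,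
    sum_eps_mul_symm₀₃_eq_zero, sum_eps_mul_symm₁₃_eq_zero]
  ring

theorem differentiableAt_lC {ϑ : Fin 4 → Pt → Fin 4 → ℝ} {x : Pt}
    (hϑ : ∀ j α, DifferentiableAt ℝ (fun y => ϑ j y α) x) (δ : Fin 4) :
    DifferentiableAt ℝ (fun y => lC ϑ y δ) x := by
  unfold lC; fun_prop

theorem differentiableAt_mC {ϑ : Fin 4 → Pt → Fin 4 → ℝ} {x : Pt}
    (hϑ : ∀ j α, DifferentiableAt ℝ (fun y => ϑ j y α) x) (δ : Fin 4) :
    DifferentiableAt ℝ (fun y => mC ϑ y δ) x := by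
  unfold mC; fun_prop

theorem modified_teleparallel_conformal_invariance_general
    (U : Set Pt) (hU : IsOpen U) (ϑ : Fin 4 → Pt → Fin 4 → ℝ)
    (hreg : ∀ j, ContDiffOn ℝ 1 (ϑ j) U)
    (s : Pt → ℝ)
    (h : Pt → ℝ) (hh : ContDiffOn ℝ 1 h U) :
    ∀ x ∈ U,
      ((Real.exp (-3 * h x) * s x : ℝ) : ℂ) *
        lam (fun y α => (Real.exp (h y) : ℂ) * lC ϑ y α)
          (fun y α => (Real.exp (h y) : ℂ) * mC ϑ y α)
          (fun y α => (Real.exp (h y) : ℂ) * nC ϑ y α) x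
      = (s x : ℂ) * lam (fun y α => lC ϑ y α) (fun y α => mC ϑ y α) (fun y α => nC ϑ y α) x := by
  intro x hx
  have hϑ : ∀ j α, DifferentiableAt ℝ (fun y => ϑ j y α) x := fun j α =>
    differentiableAt_pi.mp
      (((hreg j).contDiffAt (hU.mem_nhds hx)).differentiableAt one_ne_zero) α
  have hexp : DifferentiableAt ℝ (fun y => Real.exp (h y)) x :=
    ((hh.contDiffAt (hU.mem_nhds hx)).differentiableAt one_ne_zero).exp
  have hweight : Real.exp (-3 * h x) * Real.exp (h x) ^ 3 = 1 := by
    rw [← Real.exp_nat_mul, ← Real.exp_add]; norm_num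
  rw [lam_ofReal_mul _ hexp (differentiableAt_lC hϑ) (differentiableAt_mC hϑ)]
  calc _ = ((Real.exp (-3 * h x) * Real.exp (h x) ^ 3 * s x : ℝ) : ℂ) *
        lam (fun y α => lC ϑ y α) (fun y α => mC ϑ y α) (fun y α => nC ϑ y α) x := by
        push_cast; ring
    _ = _ := by rw [hweight, one_mul]

/-- Conformal invariance of the modified teleparallel Lagrangian: the rescaled data
ϑ̃^j := e^h ϑ^j, s̃ := e^{−3h} s satisfy s̃·λ(l̃, m̃, ñ) = s·λ(l, m, n),
where l̃ = e^h l, m̃ = e^h m, ñ = e^h n. -/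
theorem modified_teleparallel_conformal_invariance
    (U : Set Pt) (hU : IsOpen U) (ϑ : Fin 4 → Pt → Fin 4 → ℝ)
    (hreg : ∀ j, ContDiffOn ℝ 1 (ϑ j) U)
    (hdet : ∀ x ∈ U, 0 < cofDet ϑ x)
    (s : Pt → ℝ) (hs : ContDiffOn ℝ 1 s U) (hspos : ∀ x ∈ U, 0 < s x)
    (h : Pt → ℝ) (hh : ContDiffOn ℝ 1 h U) :
    ∀ x ∈ U,
      ((Real.exp (-3 * h x) * s x : ℝ) : ℂ) *
        lam (fun y α => (Real.exp (h y) : ℂ) * lC ϑ y α)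
          (fun y α => (Real.exp (h y) : ℂ) * mC ϑ y α)
          (fun y α => (Real.exp (h y) : ℂ) * nC ϑ y α) x
      = (s x : ℂ) * lam (fun y α => lC ϑ y α) (fun y α => mC ϑ y α) (fun y α => nC ϑ y α) x :=
  modified_teleparallel_conformal_invariance_general U hU ϑ hreg s h hh
end
end
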